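/- For d ≥ 2, there exists a d-simplex in Euclidean d-space whose circumcenter lies outside the simplex and whose d+1 cevians through the circumcenter all have equal length, if and only if d ≥ 4. -/

import Mathlib

/-
Common geometric notions for simplices in Euclidean d-space, following
Edmonds–Hajja–Martini, "Coincidences of simplex centers and related facial
structures".  A d-simplex is given by its d+1 affinely independent vertices
`A : Fin (d+1) → EuclideanSpace ℝ (Fin d)`.
-/

noncomputable section

abbrev Pt (d : ℕ) : Type := EuclideanSpace ℝ (Fin d)

variable {d : ℕ}

/-- The centroid of the simplex with vertices `A`: the average of the vertices. -/
def ctr (A : Fin (d+1) → Pt d) : Pt d := Finset.centroid ℝ Finset.univ A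

/-- `C` is a circumcenter of the simplex with vertices `A`:
it is equidistant from all the vertices. -/
def IsCircumcenter (A : Fin (d+1) → Pt d) (C : Pt d) : Prop :=
  ∃ r : ℝ, ∀ i, dist C (A i) = r

/-- The affine span (hyperplane) of the facet opposite to vertex `j`. -/
def facetSpan (A : Fin (d+1) → Pt d) (j : Fin (d+1)) : Set (Pt d) :=
  (affineSpan ℝ (A '' {i | i ≠ j}) : Set (Pt d))

/-- `I` is the incenter of the simplex with vertices `A`: an interior point
equidistant from the affine hyperplanes spanned by the facets. -/
def IsIncenter (A : Fin (d+1) → Pt d) (I : Pt d) : Prop :=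
  I ∈ interior (convexHull ℝ (Set.range A)) ∧
    ∃ r : ℝ, ∀ j, Metric.infDist I (facetSpan A j) = r

/-- `F` is a Fermat-Torricelli point of the simplex with vertices `A`:
it minimizes the sum of the distances to the vertices. -/
def IsFermatPoint (A : Fin (d+1) → Pt d) (F : Pt d) : Prop :=
  ∀ Q : Pt d, ∑ i, dist F (A i) ≤ ∑ i, dist Q (A i)

/-- The altitude of the simplex at vertex `j`: the distance from `A j` to the
affine span of the opposite facet. -/
def altitude (A : Fin (d+1) → Pt d) (j : Fin (d+1)) : ℝ :=
  Metric.infDist (A j) (facetSpan A j)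

/-- Equiareal: all facets have the same `(d-1)`-dimensional volume; equivalently
(since `d · vol S = facet volume · altitude`), all altitudes are equal. -/
def Equiareal (A : Fin (d+1) → Pt d) : Prop :=
  ∀ j k, altitude A j = altitude A k

/-- `r` is the circumradius of the facet opposite `j`: some point of the affine
span of the facet is at distance `r` from all its vertices. -/
def IsFacetCircumradius (A : Fin (d+1) → Pt d) (j : Fin (d+1)) (r : ℝ) : Prop :=
  ∃ C ∈ affineSpan ℝ (A '' {i | i ≠ j}), ∀ i, i ≠ j → dist C (A i) = r

/-- Equiradial: all facets have the same circumradius. -/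
def Equiradial (A : Fin (d+1) → Pt d) : Prop :=
  ∃ r : ℝ, ∀ j, IsFacetCircumradius A j r

/-- Equifacetal: any two facets are congruent, i.e. there is an isometry of the
ambient space carrying the vertex set of one facet onto that of the other. -/
def Equifacetal (A : Fin (d+1) → Pt d) : Prop :=
  ∀ j k, ∃ f : Pt d ≃ᵢ Pt d, f '' (A '' {i | i ≠ j}) = A '' {i | i ≠ k}

/-- Regular: all edges have equal length. -/
def Regular (A : Fin (d+1) → Pt d) : Prop :=
  ∀ i j k l, i ≠ j → k ≠ l → dist (A i) (A j) = dist (A k) (A l)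

/-- `Q` is the foot of the cevian through vertex `A j` relative to the point `P`:
`Q` is the point where the line through `A j` and `P` meets the (affine span of
the) opposite facet. -/
def IsCevianFoot (A : Fin (d+1) → Pt d) (j : Fin (d+1)) (P Q : Pt d) : Prop :=
  Collinear ℝ ({A j, P, Q} : Set (Pt d)) ∧ Q ∈ affineSpan ℝ (A '' {i | i ≠ j})

/-- All `d+1` cevians through `P` exist and have equal lengths. -/
def EqualCevians (A : Fin (d+1) → Pt d) (P : Pt d) : Prop :=
  ∃ L : ℝ, ∀ j, ∃ Q, IsCevianFoot A j P Q ∧ dist (A j) Q = L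

/-!
Let `c_j` be the barycentric coordinates of the circumcenter `O`. The cevian from `A_j` through
`O` exists iff `c_j ≠ 1`, and then its length is `|A_j O| / |1 - c_j|`; since `O` is equidistant
from the vertices, the cevians are equal exactly when `|1 - c_j| = κ` for all `j`. `O` lies
outside the simplex iff some `c_j < 0`, which forces `κ > 1`, so every `c_j` is `1 + κ` or
`1 - κ`. If `n` of them equal `1 + κ`, then `∑ c_j = 1` gives `κ (d + 1 - 2n) = d`, so `n ≥ 1`;
and `n = 1` is impossible, because the triangle inequality applied to `∑ c_j (A_j - O) = 0`
would give `1 + κ ≤ d (κ - 1) = κ`. Hence `4 ≤ 2n < d + 1`.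

Conversely, for `d = m + 1 ≥ 4` take the orthonormal vectors `e_0, …, e_{m-1}` and the two
apexes `s ∑ e_k ± h e_m` with `s = 3 / (2 (2m - 1))` and `m s² + h² = 1`. The circumcenter `0`
has coordinates `(2m - 1) / (m - 2)` at the apexes and `-3 / (m - 2)` at the other vertices,
all at distance `(m + 1) / (m - 2)` from `1`.
-/

theorem AffineBasis.mem_affineSpan_image_ne_iff {ι k V P : Type*} [Fintype ι] [Ring k]
    [Nontrivial k] [AddCommGroup V] [Module k V] [AddTorsor V P] (b : AffineBasis ι k P)
    (j : ι) (q : P) :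
    q ∈ affineSpan k (b '' {i | i ≠ j}) ↔ b.coord j q = 0 := by
  constructor
  · intro hq
    obtain ⟨s, w, hs, hw, rfl⟩ := eq_affineCombination_of_mem_affineSpan_image hq
    exact b.coord_apply_combination_of_notMem (fun hj => hs hj rfl) hw
  · intro hq
    rw [← b.affineCombination_coord_eq_self q]
    refine affineCombination_mem_affineSpan_image (b.sum_coord_apply_eq_one q) ?_ b
    rintro i - hi
    rwa [not_not.1 hi]

theorem AffineBasis.coord_lineMap {ι k V P : Type*} [CommRing k] [AddCommGroup V] [Module k V]
    [AddTorsor V P] (b : AffineBasis ι k P) (j : ι) (p : P) (t : k) :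
    b.coord j (AffineMap.lineMap (b j) p t) = 1 - t * (1 - b.coord j p) := by
  rw [AffineMap.apply_lineMap, b.coord_apply_eq, AffineMap.lineMap_apply_ring']
  ring

def simplexBasis (A : Fin (d+1) → Pt d) (hA : AffineIndependent ℝ A) :
    AffineBasis (Fin (d+1)) ℝ (Pt d) :=
  ⟨A, hA, hA.affineSpan_eq_top_iff_card_eq_finrank_add_one.mpr (by simp)⟩

@[simp] theorem coe_simplexBasis (A : Fin (d+1) → Pt d) (hA : AffineIndependent ℝ A) :
    ⇑(simplexBasis A hA) = A := rfl

theorem isCevianFoot_iff (b : AffineBasis (Fin (d+1)) ℝ (Pt d)) {j : Fin (d+1)} {P Q : Pt d}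
    (hP : b j ≠ P) :
    IsCevianFoot b j P Q ↔
      ∃ t : ℝ, t * (1 - b.coord j P) = 1 ∧ AffineMap.lineMap (b j) P t = Q := by
  have hline : Collinear ℝ {b j, P, Q} ↔ Q ∈ line[ℝ, b j, P] := by
    refine ⟨fun h => h.mem_affineSpan_of_mem_of_ne (by simp) (by simp) (by simp) hP, fun h => ?_⟩
    rw [Set.pair_comm, Set.insert_comm]
    exact collinear_insert_of_mem_affineSpan_pair h
  rw [IsCevianFoot, hline, mem_affineSpan_pair_iff_exists_lineMap_eq,
    b.mem_affineSpan_image_ne_iff]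
  constructor
  · rintro ⟨⟨t, rfl⟩, h0⟩
    exact ⟨t, by linarith [b.coord_lineMap j P t], rfl⟩
  · rintro ⟨t, ht, rfl⟩
    exact ⟨⟨t, rfl⟩, by rw [b.coord_lineMap, ht, sub_self]⟩

theorem exists_isCevianFoot_dist_eq_iff (b : AffineBasis (Fin (d+1)) ℝ (Pt d)) {j : Fin (d+1)}
    {P : Pt d} (hP : b j ≠ P) (L : ℝ) :
    (∃ Q, IsCevianFoot b j P Q ∧ dist (b j) Q = L) ↔
      L * |1 - b.coord j P| = dist (b j) P := by
  simp_rw [isCevianFoot_iff b hP]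
  constructor
  · rintro ⟨_, ⟨t, ht, rfl⟩, rfl⟩
    rw [dist_left_lineMap, Real.norm_eq_abs, mul_right_comm, ← abs_mul, ht, abs_one, one_mul]
  · intro hL
    have h1 : 1 - b.coord j P ≠ 0 := by
      rintro h
      rw [h, abs_zero, mul_zero, eq_comm, dist_eq_zero] at hL
      exact hP hL
    refine ⟨_, ⟨(1 - b.coord j P)⁻¹, inv_mul_cancel₀ h1, rfl⟩, ?_⟩
    rw [dist_left_lineMap, ← hL, Real.norm_eq_abs, abs_inv]
    field_simp

theorem equalCevians_iff {A : Fin (d+1) → Pt d} (hA : AffineIndependent ℝ A) {P : Pt d} {r : ℝ}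
    (hr : ∀ i, dist P (A i) = r) (hr0 : 0 < r) :
    EqualCevians A P ↔ ∃ κ > 0, ∀ j, |1 - (simplexBasis A hA).coord j P| = κ := by
  set b := simplexBasis A hA
  have hP : ∀ j, b j ≠ P := fun j h => hr0.ne' (by rw [← hr j, ← h, coe_simplexBasis, dist_self])
  change (∃ L : ℝ, ∀ j, ∃ Q, IsCevianFoot b j P Q ∧ dist (b j) Q = L) ↔ _
  simp_rw [exists_isCevianFoot_dist_eq_iff b (hP _), dist_comm _ P, b, coe_simplexBasis, hr]
  constructor
  · rintro ⟨L, hL⟩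
    have hL0 : 0 < L := pos_of_mul_pos_left (hr0.trans_eq (hL 0).symm) (abs_nonneg _)
    exact ⟨r / L, div_pos hr0 hL0, fun j => by rw [← hL j]; field_simp⟩
  · rintro ⟨κ, hκ, h⟩
    exact ⟨r / κ, fun j => by rw [h j]; field_simp⟩

open Finset in
theorem abs_le_sum_abs_of_sum_smul_eq_zero {ι V : Type*} [Fintype ι] [DecidableEq ι]
    [SeminormedAddCommGroup V] [NormedSpace ℝ V] {v : ι → V} {c : ι → ℝ} {r : ℝ}
    (hv : ∀ i, ‖v i‖ = r) (hr : 0 < r) (hcv : ∑ i, c i • v i = 0) (j : ι) :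
    |c j| ≤ ∑ i ∈ univ.erase j, |c i| := by
  have hj : c j • v j = -∑ i ∈ univ.erase j, c i • v i := by
    rw [eq_neg_iff_add_eq_zero, add_comm, sum_erase_add _ _ (mem_univ j), hcv]
  refine le_of_mul_le_mul_right ?_ hr
  calc |c j| * r = ‖c j • v j‖ := by rw [norm_smul, hv, Real.norm_eq_abs]
    _ = ‖∑ i ∈ univ.erase j, c i • v i‖ := by rw [hj, norm_neg]
    _ ≤ ∑ i ∈ univ.erase j, ‖c i • v i‖ := norm_sum_le _ _
    _ = (∑ i ∈ univ.erase j, |c i|) * r := by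
      rw [sum_mul]
      exact sum_congr rfl fun i _ => by rw [norm_smul, hv, Real.norm_eq_abs]

theorem eq_ite_of_abs_one_sub_eq {x κ : ℝ} (h : |1 - x| = κ) :
    x = if 1 < x then 1 + κ else 1 - κ := by
  split_ifs with hx
  · rw [abs_of_neg (by linarith)] at h
    linarith
  · rw [abs_of_nonneg (by linarith)] at h
    linarith

open Finset in
theorem sum_eq_of_abs_one_sub_eq {ι : Type*} [Fintype ι] {c : ι → ℝ} {κ : ℝ}
    (hκ : ∀ i, |1 - c i| = κ) :
    ∑ i, c i = Fintype.card ι + κ * (2 * #{i | 1 < c i} - Fintype.card ι) := by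
  rw [sum_congr rfl fun i _ => eq_ite_of_abs_one_sub_eq (hκ i), sum_ite, sum_const, sum_const,
    nsmul_eq_mul, nsmul_eq_mul]
  have hcard : (#{i | 1 < c i} : ℝ) + #{i | ¬1 < c i} = Fintype.card ι := by
    exact_mod_cast card_filter_add_card_filter_not (s := univ) fun i => 1 < c i
  linear_combination (1 - κ) * hcard

open Finset in
theorem one_add_le_mul_of_card_filter_eq_one {ι V : Type*} [Fintype ι] [DecidableEq ι]
    [SeminormedAddCommGroup V] [NormedSpace ℝ V] {v : ι → V} {c : ι → ℝ} {r κ : ℝ}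
    (hv : ∀ i, ‖v i‖ = r) (hr : 0 < r) (hcv : ∑ i, c i • v i = 0) (hκ : ∀ i, |1 - c i| = κ)
    (hκ1 : 1 < κ) (hs1 : #{i | 1 < c i} = 1) : 1 + κ ≤ (Fintype.card ι - 1) * (κ - 1) := by
  obtain ⟨j, hj⟩ := card_eq_one.1 hs1
  have hmem : ∀ i, 1 < c i ↔ i = j := fun i => by
    rw [← mem_singleton, ← hj, mem_filter, and_iff_right (mem_univ i)]
  have habs_j : |c j| = 1 + κ := by
    rw [eq_ite_of_abs_one_sub_eq (hκ j), if_pos ((hmem j).2 rfl), abs_of_pos (by linarith)]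
  have habs_ne : ∀ i ≠ j, |c i| = κ - 1 := fun i hi => by
    rw [eq_ite_of_abs_one_sub_eq (hκ i), if_neg (mt (hmem i).1 hi), abs_of_neg (by linarith)]
    ring
  have key := abs_le_sum_abs_of_sum_smul_eq_zero hv hr hcv j
  rwa [habs_j, sum_congr rfl fun i hi => habs_ne i (ne_of_mem_erase hi), sum_const,
    card_erase_of_mem (mem_univ j), card_univ, nsmul_eq_mul,
    Nat.cast_pred (Fintype.card_pos_iff.2 ⟨j⟩)] at key

open Finset in
theorem five_le_card_of_sum_smul_eq_zero {ι V : Type*} [Fintype ι] [SeminormedAddCommGroup V]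
    [NormedSpace ℝ V] {v : ι → V} {c : ι → ℝ} {r κ : ℝ} (hv : ∀ i, ‖v i‖ = r) (hr : 0 < r)
    (hc : ∑ i, c i = 1) (hcv : ∑ i, c i • v i = 0) (hκ : ∀ i, |1 - c i| = κ)
    (hneg : ∃ i, c i < 0) : 5 ≤ Fintype.card ι := by
  classical
  obtain ⟨i₀, hi₀⟩ := hneg
  have hκ1 : 1 < κ := by
    rw [← hκ i₀, abs_of_pos (by linarith)]
    linarith
  set n := #{i | 1 < c i}
  set N := Fintype.card ι
  have hcount : κ * (N - 2 * n) = N - 1 := by linear_combination sum_eq_of_abs_one_sub_eq hκ - hc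
  have hnN : n ≤ N := card_filter_le _ _
  have hn1 : n ≠ 1 := fun hn1 => by
    have key := one_add_le_mul_of_card_filter_eq_one hv hr hcv hκ hκ1 hn1
    rw [hn1, Nat.cast_one] at hcount
    nlinarith
  have hn0 : n ≠ 0 := fun hn0 => by
    rw [hn0, Nat.cast_zero, mul_zero, sub_zero] at hcount
    nlinarith
  by_contra hN
  have : (N : ℝ) ≤ 2 * n := by exact_mod_cast (by omega : N ≤ 2 * n)
  have : (2 : ℝ) ≤ N := by exact_mod_cast (by omega : 2 ≤ N)
  nlinarith

theorem four_le_of_equalCevians_circumcenter {A : Fin (d+1) → Pt d} (hA : AffineIndependent ℝ A)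
    {C : Pt d} (hC : IsCircumcenter A C) (hout : C ∉ convexHull ℝ (Set.range A))
    (hcev : EqualCevians A C) : 4 ≤ d := by
  obtain ⟨r, hr⟩ := hC
  set b := simplexBasis A hA
  have hr0 : 0 < r := by
    rw [← hr 0]
    exact dist_pos.2 fun h => hout (h ▸ subset_convexHull ℝ _ (Set.mem_range_self 0))
  obtain ⟨κ, -, hκ⟩ := (equalCevians_iff hA hr hr0).1 hcev
  have hneg : ∃ i, b.coord i C < 0 := by
    rw [show Set.range A = Set.range b from rfl, b.convexHull_eq_nonneg_coord] at hout
    simpa using hout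
  have hcv : ∑ i, b.coord i C • (A i - C) = 0 := by
    simp only [smul_sub, Finset.sum_sub_distrib, ← Finset.sum_smul, b.sum_coord_apply_eq_one,
      one_smul, sub_eq_zero]
    exact b.linear_combination_coord_eq_self C
  have h5 := five_le_card_of_sum_smul_eq_zero (fun i => by rw [← dist_eq_norm, dist_comm, hr])
    hr0 (b.sum_coord_apply_eq_one C) hcv hκ hneg
  simpa using h5

theorem AffineBasis.coord_zero_eq_div {ι k V : Type*} [Fintype ι] [Field k] [AddCommGroup V]
    [Module k V] (b : AffineBasis ι k V) {w : ι → k} (hw : ∑ i, w i • b i = 0)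
    (hw0 : ∑ i, w i ≠ 0) (i : ι) : b.coord i 0 = w i / ∑ i, w i := by
  have hsum : ∑ i, w i / ∑ j, w j = 1 := by rw [← Finset.sum_div, div_self hw0]
  have hcomb : Finset.univ.affineCombination k b (fun i => w i / ∑ j, w j) = 0 := by
    simp_rw [Finset.univ.affineCombination_eq_linear_combination _ _ hsum, div_eq_inv_mul,
      ← smul_smul, ← Finset.smul_sum, hw, smul_zero]
  rw [← hcomb, b.coord_apply_combination_of_mem (Finset.mem_univ i) hsum]

section TwinApex

variable {V : Type*} [NormedAddCommGroup V] [InnerProductSpace ℝ V] {m : ℕ}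

def twinApex (e : Fin (m+1) → V) (s h : ℝ) : V :=
  s • ∑ k : Fin m, e k.castSucc + h • e (Fin.last m)

def twinApexSimplex (e : Fin (m+1) → V) (s h : ℝ) : Fin (m+2) → V :=
  Fin.cons (twinApex e s h) (Fin.cons (twinApex e s (-h)) fun k => e k.castSucc)

def twinApexWeights (s : ℝ) : Fin (m+2) → ℝ :=
  Fin.cons 1 (Fin.cons 1 fun _ => -2 * s)

theorem sum_twinApexWeights (s : ℝ) : ∑ i, twinApexWeights (m := m) s i = 2 * (1 - m * s) := by
  simp only [twinApexWeights, Fin.sum_univ_succ, Fin.cons_zero, Fin.cons_succ, Finset.sum_const,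
    Finset.card_univ, Fintype.card_fin, nsmul_eq_mul]
  ring

theorem sum_twinApexWeights_smul (e : Fin (m+1) → V) (s h : ℝ) :
    ∑ i, twinApexWeights s i • twinApexSimplex e s h i = 0 := by
  simp only [twinApexWeights, twinApexSimplex, twinApex, Fin.sum_univ_succ, Fin.cons_zero,
    Fin.cons_succ, one_smul, ← Finset.smul_sum]
  module

variable {e : Fin (m+1) → V}

theorem inner_castSucc_twinApex (he : Orthonormal ℝ e) (s h : ℝ) (k : Fin m) :
    inner ℝ (e k.castSucc) (twinApex e s h) = s := by
  simp [twinApex, inner_add_right, inner_smul_right, inner_sum, orthonormal_iff_ite.1 he]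

theorem inner_last_twinApex (he : Orthonormal ℝ e) (s h : ℝ) :
    inner ℝ (e (Fin.last m)) (twinApex e s h) = h := by
  simp [twinApex, inner_add_right, inner_smul_right, inner_sum, orthonormal_iff_ite.1 he,
    eq_comm (a := Fin.last m), Fin.castSucc_ne_last, he.1]

theorem norm_twinApex (he : Orthonormal ℝ e) {s h : ℝ} (hsh : m * s ^ 2 + h ^ 2 = 1) :
    ‖twinApex e s h‖ = 1 := by
  have hsq : ‖twinApex e s h‖ ^ 2 = 1 := by
    rw [← real_inner_self_eq_norm_sq]
    conv_lhs => arg 2; rw [twinApex]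
    simp only [inner_add_left, inner_smul_left, sum_inner, inner_castSucc_twinApex he,
      inner_last_twinApex he, Finset.sum_const, Finset.card_univ, Fintype.card_fin, nsmul_eq_mul,
      RCLike.conj_to_real]
    linear_combination hsh
  exact (pow_eq_one_iff_of_nonneg (norm_nonneg _) two_ne_zero).1 hsq

theorem norm_twinApexSimplex (he : Orthonormal ℝ e) {s h : ℝ} (hsh : m * s ^ 2 + h ^ 2 = 1)
    (i : Fin (m+2)) : ‖twinApexSimplex e s h i‖ = 1 := by
  refine Fin.cases ?_ (Fin.cases ?_ fun k => ?_) i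
  · exact norm_twinApex he hsh
  · exact norm_twinApex he (by rwa [neg_sq])
  · exact he.1 _

theorem affineIndependent_twinApexSimplex (he : Orthonormal ℝ e) {s h : ℝ} (hms : m * s ≠ 1)
    (hh : h ≠ 0) : AffineIndependent ℝ (twinApexSimplex e s h) := by
  rw [affineIndependent_iff_of_fintype]
  intro w hw0 hw
  rw [Finset.weightedVSub_eq_linear_combination _ hw0] at hw
  have hinner : ∀ x, ∑ i, w i * inner ℝ x (twinApexSimplex e s h i) = 0 := fun x => by
    simp_rw [← inner_smul_right, ← inner_sum, hw, inner_zero_right]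
  have hlast := hinner (e (Fin.last m))
  have hbase := fun k => hinner (e (Fin.castSucc k))
  simp only [twinApexSimplex, Fin.sum_univ_succ, Fin.cons_zero, Fin.cons_succ, Fin.succ_zero_eq_one,
    inner_castSucc_twinApex he, inner_last_twinApex he, orthonormal_iff_ite.1 he,
    eq_comm (a := Fin.last m), Fin.castSucc_ne_last, Fin.castSucc_inj, if_false, mul_zero, mul_ite,
    mul_one, Finset.sum_const_zero, add_zero, Finset.sum_ite_eq, Finset.mem_univ, if_true,
    mul_neg] at hlast hbase
  have h01 : w 1 = w 0 := by
    have : (w 0 - w 1) * h = 0 := by linear_combination hlast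
    linarith [(mul_eq_zero.1 this).resolve_right hh]
  have hk : ∀ k : Fin m, w k.succ.succ = -2 * s * w 0 := fun k => by
    linear_combination hbase k - s * h01
  have h0 : w 0 = 0 := by
    simp only [Fin.sum_univ_succ, Fin.succ_zero_eq_one, hk, Finset.sum_const, Finset.card_univ,
      Fintype.card_fin, nsmul_eq_mul] at hw0
    have : 2 * (1 - m * s) * w 0 = 0 := by linear_combination hw0 - h01
    exact (mul_eq_zero.1 this).resolve_left (mul_ne_zero two_ne_zero (sub_ne_zero.2 hms.symm))
  intro i
  refine Fin.cases h0 (Fin.cases (h01.trans h0) fun k => ?_) i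
  rw [hk, h0, mul_zero]

theorem twinApexSimplex_coord_zero {s h : ℝ} (b : AffineBasis (Fin (m+2)) ℝ V)
    (hb : ⇑b = twinApexSimplex e s h) (hms : m * s ≠ 1) (i : Fin (m+2)) :
    b.coord i 0 = twinApexWeights s i / (2 * (1 - m * s)) := by
  have hD : 2 * (1 - m * s) ≠ 0 := mul_ne_zero two_ne_zero (sub_ne_zero.2 (Ne.symm hms))
  rw [b.coord_zero_eq_div (hb ▸ sum_twinApexWeights_smul e s h) (sum_twinApexWeights s ▸ hD),
    sum_twinApexWeights]

end TwinApex

theorem abs_one_sub_twinApexWeights_div {m : ℕ} (hm : 3 ≤ m) {s : ℝ}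
    (hs : 2 * (2 * m - 1) * s = 3) (i : Fin (m+2)) : |1 - twinApexWeights s i / (2 * (1 - m * s))| = (m + 1) / (m - 2) := by
  have hm' : (3 : ℝ) ≤ m := by exact_mod_cast hm
  have h2 : (2 * m - 1 : ℝ) ≠ 0 := by linarith
  have hm2 : (m - 2 : ℝ) ≠ 0 := by linarith
  have hs' : s = 3 / (2 * (2 * m - 1)) := by rw [eq_div_iff (by positivity)]; linarith
  have hD : 2 * (1 - m * s) = (m - 2) / (2 * m - 1) := by
    rw [hs']
    field_simp
    ring
  have hκ : 0 < (m + 1) / (m - 2 : ℝ) := div_pos (by linarith) (by linarith)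
  have hapex : 1 - 1 / (2 * (1 - m * s)) = -((m + 1) / (m - 2 : ℝ)) := by
    rw [hD]
    field_simp
    ring
  have hbase : 1 - -2 * s / (2 * (1 - m * s)) = (m + 1) / (m - 2 : ℝ) := by
    rw [hD, hs']
    field_simp
    ring
  refine Fin.cases ?_ (Fin.cases ?_ fun k => ?_) i <;>
    simp only [twinApexWeights, Fin.cons_zero, Fin.cons_succ, hapex, hbase, abs_neg,
      abs_of_pos hκ]

theorem exists_equalCevians_circumcenter_not_mem_convexHull {m : ℕ} (hm : 3 ≤ m) :
    ∃ A : Fin (m+2) → Pt (m+1), AffineIndependent ℝ A ∧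
      ∃ C : Pt (m+1), IsCircumcenter A C ∧ C ∉ convexHull ℝ (Set.range A) ∧
        EqualCevians A C := by
  have hm' : (3 : ℝ) ≤ m := by exact_mod_cast hm
  set s : ℝ := 3 / (2 * (2 * m - 1))
  have hs : 2 * (2 * m - 1) * s = 3 := mul_div_cancel₀ _ (by linarith)
  have hs0 : 0 < s := div_pos (by norm_num) (by linarith)
  have hms : 0 < 1 - m * s := by nlinarith
  have hh : 0 < 1 - m * s ^ 2 := by nlinarith
  set h := √(1 - m * s ^ 2)
  have hsh : m * s ^ 2 + h ^ 2 = 1 := by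
    rw [Real.sq_sqrt hh.le]
    ring
  set e := EuclideanSpace.basisFun (Fin (m+1)) ℝ
  set A := twinApexSimplex e s h
  have hA : AffineIndependent ℝ A :=
    affineIndependent_twinApexSimplex e.orthonormal (by linarith) (Real.sqrt_pos.2 hh).ne'
  set b := simplexBasis A hA
  have hcoord := twinApexSimplex_coord_zero b rfl (by linarith)
  have hr : ∀ i, dist 0 (A i) = 1 := fun i => by
    rw [dist_comm, dist_zero_right, norm_twinApexSimplex e.orthonormal hsh]
  refine ⟨A, hA, 0, ⟨1, hr⟩, ?_, ?_⟩
  · rw [show Set.range A = Set.range b from rfl, b.convexHull_eq_nonneg_coord]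
    intro h0
    have hbase := h0 (Fin.succ (Fin.succ ⟨0, by omega⟩))
    rw [hcoord, twinApexWeights, Fin.cons_succ, Fin.cons_succ] at hbase
    exact absurd hbase (not_le.2 (div_neg_of_neg_of_pos (by linarith) (by linarith)))
  · refine (equalCevians_iff hA hr one_pos).2 ⟨(m + 1) / (m - 2), ?_, fun j => ?_⟩
    · exact div_pos (by linarith) (by linarith)
    · rw [hcoord, abs_one_sub_twinApexWeights_div hm hs]

theorem statement19_general (d : ℕ) :
    (∃ A : Fin (d+1) → Pt d, AffineIndependent ℝ A ∧
      ∃ C : Pt d, IsCircumcenter A C ∧ C ∉ convexHull ℝ (Set.range A) ∧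
        EqualCevians A C) ↔ 4 ≤ d := by
  constructor
  · rintro ⟨A, hA, C, hC, hout, hcev⟩
    exact four_le_of_equalCevians_circumcenter hA hC hout hcev
  · intro hd
    obtain ⟨m, rfl⟩ : ∃ m, d = m + 1 := ⟨d - 1, by omega⟩
    exact exists_equalCevians_circumcenter_not_mem_convexHull (by omega)

/-- Theorem 5.5. For `d ≥ 2`, there exists a `d`-simplex
whose circumcenter lies outside the simplex and whose `d+1` cevians through
the circumcenter all have equal length, if and only if `d ≥ 4`. -/
theorem statement19 (d : ℕ) (hd : 2 ≤ d) :
    (∃ A : Fin (d+1) → Pt d, AffineIndependent ℝ A ∧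
      ∃ C : Pt d, IsCircumcenter A C ∧ C ∉ convexHull ℝ (Set.range A) ∧
        EqualCevians A C) ↔ 4 ≤ d :=
  statement19_general d
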